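/- Let F₁ be a probability measure on [0,∞) with density f ∈ 𝓛₀, and let F₂ be any probability measure on (−∞, 0]. Then for every d > 0, the convolution satisfies (F₁ * F₂)((x, x+d]) ~ d·∫_{(−∞,0]} f(x−y) F₂(dy) as x → ∞, where F₁ * F₂ is the law of X₁ + Y with X₁ ~ F₁ and Y ~ F₂ independent. -/

import Mathlib

/-!
Egorov's theorem upgrades the pointwise convergence `log f (x + t) - log f x → 0` to uniform
convergence for `t ∈ [0, d]`: if the increment over some `t` stayed large, then for a good
`s ∈ [t, t + d]` it would be the difference of the increments over `s` at `x` and over `s - t`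
at `x + t`, both small. Hence `F₁((z, z + d]) ~ d f(z)` uniformly in large `z`. Since
`(F₁ * F₂)((x, x + d]) = ∫ F₁((x - y, x - y + d]) F₂(dy)` and `x - y ≥ x` for `F₂`-almost every
`y`, the integrand lies between `(1 ± ε) d f(x - y)` for all large `x`.
-/

open MeasureTheory Filter Set

noncomputable section

/-- A probability density supported on `[0, ∞)`. -/
def IsDensity (f : ℝ → ℝ) : Prop :=
  Measurable f ∧ (∀ x < (0:ℝ), f x = 0) ∧ (∀ x : ℝ, 0 ≤ f x) ∧
    ∫ y in Set.Ioi (0:ℝ), f y = 1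

/-- The long-tailed density class `𝓛₀`. -/
def LongTailedDensity (f : ℝ → ℝ) : Prop :=
  (∀ᶠ x in atTop, 0 < f x) ∧
  ∀ t : ℝ, Tendsto (fun x => f (x + t) / f x) atTop (nhds 1)

/-- The subexponential density class `𝓢₀`. -/
def SubexpDensity (f : ℝ → ℝ) : Prop :=
  LongTailedDensity f ∧
  Tendsto (fun x => (∫ y in (0:ℝ)..x, f (x - y) * f y) / f x) atTop (nhds 2)

/-- The local mass `F((x, x+d])` of a measure, as a real number. -/
def locMass (F : Measure ℝ) (d x : ℝ) : ℝ := (F (Set.Ioc x (x + d))).toReal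

/-- `F ∈ 𝓛_{Δ_d}`. -/
def MemLdelta (F : Measure ℝ) (d : ℝ) : Prop :=
  (∀ᶠ x in atTop, 0 < locMass F d x) ∧
  ∀ t > (0:ℝ), ∀ ε > (0:ℝ), ∀ᶠ x in atTop, ∀ s : ℝ, |s| ≤ t →
    |locMass F d (x + s) / locMass F d x - 1| ≤ ε

/-- Convolution of two measures on `ℝ`: the law of the sum of two
independent random variables with laws `F` and `G`. -/
def mconv (F G : Measure ℝ) : Measure ℝ :=
  Measure.map (fun p : ℝ × ℝ => p.1 + p.2) (F.prod G)

/-- `F ∈ 𝓢_{Δ_d}`. -/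
def MemSdelta (F : Measure ℝ) (d : ℝ) : Prop :=
  MemLdelta F d ∧
  Tendsto (fun x => locMass (mconv F F) d x / locMass F d x) atTop (nhds 2)

/-- The probability measure on `[0,∞)` with density `f`. -/
def densMeasure (f : ℝ → ℝ) : Measure ℝ :=
  volume.withDensity (fun y => ENNReal.ofReal (f y))

open Topology

theorem IsDensity.isProbabilityMeasure_densMeasure {f : ℝ → ℝ} (hf : IsDensity f) :
    IsProbabilityMeasure (densMeasure f) := by
  obtain ⟨hm, hneg, hnonneg, hint⟩ := hf
  have hpos : ∫⁻ y in Ioi 0, ENNReal.ofReal (f y) = 1 := by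
    rw [← ofReal_integral_eq_lintegral_ofReal
      (Integrable.of_integral_ne_zero (hint ▸ one_ne_zero)) (ae_of_all _ fun y => hnonneg y),
      hint, ENNReal.ofReal_one]
  have hnonpos : ∫⁻ y in (Ioi 0)ᶜ, ENNReal.ofReal (f y) = 0 := by
    rw [compl_Ioi, setLIntegral_congr Iio_ae_eq_Iic.symm,
      setLIntegral_congr_fun measurableSet_Iio fun y hy => by rw [hneg y hy], ENNReal.ofReal_zero,
      lintegral_zero]
  constructor
  rw [densMeasure, withDensity_apply _ MeasurableSet.univ, Measure.restrict_univ,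
    ← lintegral_add_compl _ measurableSet_Ioi, hpos, hnonpos, add_zero]

theorem mconv_apply (μ ν : Measure ℝ) [SFinite μ] [SFinite ν] {s : Set ℝ}
    (hs : MeasurableSet s) :
    mconv μ ν s = ∫⁻ y, μ ((· + y) ⁻¹' s) ∂ν := by
  rw [mconv, Measure.map_apply measurable_add hs, Measure.prod_apply_symm (measurable_add hs)]
  rfl

theorem exists_notMem_sub_mem_Icc_diff {B₁ B₂ : Set ℝ} {d : ℝ}
    (hB : volume B₁ + volume B₂ < ENNReal.ofReal d) (t : ℝ) :
    ∃ s ∉ B₁, s - t ∈ Icc 0 d \ B₂ := by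
  by_contra hcov
  have hsub : Icc t (t + d) ⊆ B₁ ∪ (· + -t) ⁻¹' B₂ := by
    intro s hs
    by_contra hs'
    rw [mem_union, not_or] at hs'
    exact hcov ⟨s, hs'.1, ⟨by linarith [hs.1], by linarith [hs.2]⟩, hs'.2⟩
  have := (measure_mono (μ := volume) hsub).trans (measure_union_le _ _)
  rw [Real.volume_Icc, measure_preimage_add_right, add_sub_cancel_left] at this
  exact (this.trans_lt hB).false

theorem exists_tendstoUniformlyOn_Icc_diff {h : ℝ → ℝ} (hm : Measurable h)
    (hh : ∀ t, Tendsto (fun x => h (x + t) - h x) atTop (𝓝 0)) {x : ℕ → ℝ}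
    (hx : Tendsto x atTop atTop) (c : ℝ) {δ : ℝ} (hδ : 0 < δ) :
    ∃ B, volume B ≤ ENNReal.ofReal δ ∧
      TendstoUniformlyOn (fun n s => h (x n + s) - h (x n)) (fun _ => 0) atTop (Icc 0 c \ B) := by
  obtain ⟨B, -, -, hB, hunif⟩ := tendstoUniformlyOn_of_ae_tendsto (μ := volume)
    (fun n => ((hm.comp (measurable_const_add _)).sub_const _).stronglyMeasurable)
    stronglyMeasurable_const measurableSet_Icc (by simp)
    (ae_of_all _ fun s _ => (hh s).comp hx) hδ
  exact ⟨B, hB, hunif⟩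

theorem tendstoUniformlyOn_add_sub_of_tendsto {h : ℝ → ℝ} (hm : Measurable h)
    (hh : ∀ t, Tendsto (fun x => h (x + t) - h x) atTop (𝓝 0)) {d : ℝ} (hd : 0 < d) :
    TendstoUniformlyOn (fun x t => h (x + t) - h x) (fun _ => 0) atTop (Icc 0 d) := by
  rw [Metric.tendstoUniformlyOn_iff]
  intro ε hε
  by_contra hbad
  obtain ⟨x, hx_ge, t, ht, hfar⟩ : ∃ x : ℕ → ℝ, (∀ n : ℕ, (n : ℝ) ≤ x n) ∧ ∃ t : ℕ → ℝ,
      (∀ n, t n ∈ Icc 0 d) ∧ ∀ n, ε ≤ |h (x n + t n) - h (x n)| := by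
    simp only [not_eventually, not_forall, not_lt, frequently_atTop, Real.dist_eq, zero_sub,
      abs_neg] at hbad
    choose x hx_ge t ht hfar using fun n : ℕ => hbad (n : ℝ)
    exact ⟨x, hx_ge, t, ht, hfar⟩
  have hx : Tendsto x atTop atTop := tendsto_atTop_mono hx_ge tendsto_natCast_atTop_atTop
  have hxt : Tendsto (fun n => x n + t n) atTop atTop :=
    tendsto_atTop_mono (fun n => le_add_of_nonneg_right (ht n).1) hx
  have hd₄ : 0 < d / 4 := by positivity
  obtain ⟨B₁, hB₁, hunif₁⟩ := exists_tendstoUniformlyOn_Icc_diff hm hh hx (2 * d) hd₄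
  obtain ⟨B₂, hB₂, hunif₂⟩ := exists_tendstoUniformlyOn_Icc_diff hm hh hxt d hd₄
  obtain ⟨n, hn₁, hn₂⟩ := ((Metric.tendstoUniformlyOn_iff.mp hunif₁ (ε / 2) (by positivity)).and
    (Metric.tendstoUniformlyOn_iff.mp hunif₂ (ε / 2) (by positivity))).exists
  have hB : volume B₁ + volume B₂ < ENNReal.ofReal d := by
    refine (add_le_add hB₁ hB₂).trans_lt ?_
    rw [← ENNReal.ofReal_add hd₄.le hd₄.le, ENNReal.ofReal_lt_ofReal_iff hd]
    linarith
  obtain ⟨s, hs₁, hs₂⟩ := exists_notMem_sub_mem_Icc_diff hB (t n)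
  have hs : s ∈ Icc 0 (2 * d) \ B₁ :=
    ⟨⟨by linarith [hs₂.1.1, (ht n).1], by linarith [hs₂.1.2, (ht n).2]⟩, hs₁⟩
  have h₁ := hn₁ s hs
  have h₂ := hn₂ (s - t n) hs₂
  rw [Real.dist_eq, zero_sub, abs_neg] at h₁ h₂
  rw [add_add_sub_cancel] at h₂
  have := abs_sub (h (x n + s) - h (x n)) (h (x n + s) - h (x n + t n))
  rw [sub_sub_sub_cancel_left] at this
  linarith [hfar n]

theorem LongTailedDensity.tendsto_div_atTop_prod_Icc {f : ℝ → ℝ} (hL : LongTailedDensity f)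
    (hm : Measurable f) {d : ℝ} (hd : 0 < d) :
    Tendsto (fun p : ℝ × ℝ => f (p.1 + p.2) / f p.1) (atTop ×ˢ 𝓟 (Icc 0 d)) (𝓝 1) := by
  have hlog : ∀ t, Tendsto (fun x => Real.log (f (x + t)) - Real.log (f x)) atTop (𝓝 0) := by
    intro t
    have := (Real.continuousAt_log one_ne_zero).tendsto.comp (hL.2 t)
    rw [Real.log_one] at this
    refine this.congr' ?_
    filter_upwards [hL.1, (tendsto_atTop_add_const_right _ t tendsto_id).eventually hL.1]
      with x hx hxt
    exact Real.log_div hxt.ne' hx.ne'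
  have hpos : ∀ᶠ p : ℝ × ℝ in atTop ×ˢ 𝓟 (Icc 0 d), 0 < f p.1 ∧ 0 < f (p.1 + p.2) := by
    rw [eventually_prod_principal_iff]
    filter_upwards [eventually_forall_ge_atTop.2 hL.1] with x hx t ht
    exact ⟨hx x le_rfl, hx _ (le_add_of_nonneg_right ht.1)⟩
  have hexp := (Real.continuous_exp.tendsto 0).comp
    (tendsto_prod_principal_iff.2 (tendstoUniformlyOn_add_sub_of_tendsto hm.log hlog hd))
  rw [Real.exp_zero] at hexp
  refine hexp.congr' (hpos.mono fun p hp => ?_)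
  simp only [Function.comp_apply, Function.HasUncurry.uncurry, id]
  rw [Real.exp_sub, Real.exp_log hp.1, Real.exp_log hp.2]

instance (f : ℝ → ℝ) : SFinite (densMeasure f) := by
  unfold densMeasure
  infer_instance

theorem LongTailedDensity.eventually_densMeasure_Ioc_mem {f : ℝ → ℝ} (hL : LongTailedDensity f)
    (hm : Measurable f) {d ε : ℝ} (hd : 0 < d) (hε : 0 < ε) :
    ∀ᶠ z in atTop, densMeasure f (Ioc z (z + d)) ∈
      Icc (ENNReal.ofReal ((1 - ε) * d) * ENNReal.ofReal (f z))
        (ENNReal.ofReal ((1 + ε) * d) * ENNReal.ofReal (f z)) := by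
  have hclose := eventually_prod_principal_iff.1
    ((hL.tendsto_div_atTop_prod_Icc hm hd).eventually (Metric.closedBall_mem_nhds 1 hε))
  filter_upwards [hclose, hL.1] with z hz hfz
  have hbound : ∀ u ∈ Ioc z (z + d), (1 - ε) * f z ≤ f u ∧ f u ≤ (1 + ε) * f z := by
    intro u hu
    have hu' := hz (u - z) ⟨by linarith [hu.1], by linarith [hu.2]⟩
    rw [add_sub_cancel, Real.dist_eq, abs_le] at hu'
    exact ⟨(le_div_iff₀ hfz).1 (by linarith), (div_le_iff₀ hfz).1 (by linarith)⟩
  have hconst : ∀ c, ENNReal.ofReal (c * d) * ENNReal.ofReal (f z) =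
      ∫⁻ _ in Ioc z (z + d), ENNReal.ofReal (c * f z) := by
    intro c
    rw [setLIntegral_const, Real.volume_Ioc, add_sub_cancel_left, ← ENNReal.ofReal_mul' hd.le,
      ← ENNReal.ofReal_mul' hfz.le, mul_right_comm]
  rw [densMeasure, withDensity_apply _ measurableSet_Ioc, hconst, hconst]
  exact ⟨setLIntegral_mono hm.ennreal_ofReal fun u hu => ENNReal.ofReal_le_ofReal (hbound u hu).1,
    setLIntegral_mono measurable_const fun u hu => ENNReal.ofReal_le_ofReal (hbound u hu).2⟩

theorem LongTailedDensity.eventually_mconv_densMeasure_Ioc_mem {f : ℝ → ℝ}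
    (hL : LongTailedDensity f) (hm : Measurable f) {F : Measure ℝ} [SFinite F]
    (hF : ∀ᵐ y ∂F, y ≤ 0) {d ε : ℝ} (hd : 0 < d) (hε : 0 < ε) :
    ∀ᶠ x in atTop, mconv (densMeasure f) F (Ioc x (x + d)) ∈
      Icc (ENNReal.ofReal ((1 - ε) * d) * ∫⁻ y, ENNReal.ofReal (f (x - y)) ∂F)
        (ENNReal.ofReal ((1 + ε) * d) * ∫⁻ y, ENNReal.ofReal (f (x - y)) ∂F) := by
  have hshift : ∀ x y : ℝ, (· + y) ⁻¹' Ioc x (x + d) = Ioc (x - y) (x - y + d) := by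
    intro x y
    rw [preimage_add_const_Ioc, sub_add_eq_add_sub]
  filter_upwards [eventually_forall_ge_atTop.2 (hL.eventually_densMeasure_Ioc_mem hm hd hε)]
    with x hx
  have hmeas : Measurable fun y => ENNReal.ofReal (f (x - y)) :=
    (hm.comp (measurable_const_sub x)).ennreal_ofReal
  rw [mconv_apply _ _ measurableSet_Ioc, ← lintegral_const_mul _ hmeas,
    ← lintegral_const_mul _ hmeas]
  constructor <;> refine lintegral_mono_ae (hF.mono fun y hy => ?_) <;> rw [hshift]
  · exact (hx (x - y) (by linarith)).1
  · exact (hx (x - y) (by linarith)).2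

theorem LongTailedDensity.eventually_locMass_mconv_densMeasure_mem {f : ℝ → ℝ}
    (hf : IsDensity f) (hL : LongTailedDensity f) {F : Measure ℝ} [IsProbabilityMeasure F]
    (hF : ∀ᵐ y ∂F, y ≤ 0) {d ε : ℝ} (hd : 0 < d) (hε : 0 < ε) (hε₁ : ε < 1) :
    ∀ᶠ x in atTop, 0 < d * ∫ y in Iic 0, f (x - y) ∂F ∧
      locMass (mconv (densMeasure f) F) d x ∈ Icc ((1 - ε) * (d * ∫ y in Iic 0, f (x - y) ∂F))
        ((1 + ε) * (d * ∫ y in Iic 0, f (x - y) ∂F)) := by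
  have := hf.isProbabilityMeasure_densMeasure
  have : IsProbabilityMeasure (mconv (densMeasure f) F) :=
    Measure.isProbabilityMeasure_map measurable_add.aemeasurable
  filter_upwards [hL.eventually_mconv_densMeasure_Ioc_mem hf.1 hF hd hε,
    eventually_forall_ge_atTop.2 hL.1] with x ⟨hlo, hhi⟩ hpos
  set J := ∫⁻ y, ENNReal.ofReal (f (x - y)) ∂F
  have hJ_ne_top : J ≠ ⊤ := by
    intro hJ
    rw [hJ, ENNReal.mul_top (by simp [hε₁, hd])] at hlo
    exact (hlo.trans prob_le_one).not_gt ENNReal.one_lt_top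
  have hJ_ne_zero : J ≠ 0 := by
    intro hJ
    obtain ⟨y, hy₀, hy⟩ :=
      (((lintegral_eq_zero_iff (hf.1.comp (measurable_const_sub x)).ennreal_ofReal).1 hJ).and
        hF).exists
    exact (ENNReal.ofReal_pos.2 (hpos (x - y) (by linarith))).ne' hy₀
  have hI : ∫ y in Iic 0, f (x - y) ∂F = J.toReal := by
    rw [Measure.restrict_eq_self_of_ae_mem (s := Iic 0) hF]
    exact integral_eq_lintegral_of_nonneg_ae (ae_of_all _ fun y => hf.2.2.1 _)
      (hf.1.comp (measurable_const_sub x)).aestronglyMeasurable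
  have htoReal : ∀ c, 0 ≤ c → (ENNReal.ofReal (c * d) * J).toReal = c * (d * J.toReal) := by
    intro c hc
    rw [ENNReal.toReal_mul, ENNReal.toReal_ofReal (by positivity), mul_assoc]
  rw [hI, locMass]
  refine ⟨mul_pos hd (ENNReal.toReal_pos hJ_ne_zero hJ_ne_top), ?_, ?_⟩
  · rw [← htoReal _ (by linarith)]
    exact ENNReal.toReal_mono (measure_ne_top _ _) hlo
  · rw [← htoReal _ (by linarith)]
    exact ENNReal.toReal_mono (ENNReal.mul_ne_top ENNReal.ofReal_ne_top hJ_ne_top) hhi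

theorem tendsto_div_nhds_one_of_forall_mem_Icc {α : Type*} {l : Filter α} {a b : α → ℝ}
    (h : ∀ ε, 0 < ε → ε < 1 →
      ∀ᶠ x in l, 0 < b x ∧ a x ∈ Icc ((1 - ε) * b x) ((1 + ε) * b x)) :
    Tendsto (fun x => a x / b x) l (𝓝 1) := by
  rw [Metric.tendsto_nhds]
  intro ε hε
  have hmin : min (ε / 2) (1 / 2) < ε := (min_le_left _ _).trans_lt (half_lt_self hε)
  filter_upwards [h (min (ε / 2) (1 / 2)) (by positivity)
    ((min_le_right _ _).trans_lt one_half_lt_one)] with x ⟨hb, hlo, hhi⟩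
  rw [Real.dist_eq, abs_sub_lt_iff, sub_lt_iff_lt_add', sub_lt_comm, div_lt_iff₀ hb,
    lt_div_iff₀ hb]
  constructor <;> nlinarith

theorem conv_local_mass_asymptotic_of_long_tailed_density (f : ℝ → ℝ)
    (hf : IsDensity f) (hL : LongTailedDensity f)
    (F₂ : Measure ℝ) (hF₂ : IsProbabilityMeasure F₂)
    (hsupp : F₂ (Set.Ioi 0) = 0) :
    ∀ d > (0:ℝ),
      Tendsto (fun x =>
          locMass (mconv (densMeasure f) F₂) d x /
            (d * ∫ y in Set.Iic (0:ℝ), f (x - y) ∂F₂)) atTop (nhds 1) := by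
  have hneg : ∀ᵐ y ∂F₂, y ≤ 0 :=
    (measure_eq_zero_iff_ae_notMem.1 hsupp).mono fun _ hy => not_lt.1 hy
  intro d hd
  exact tendsto_div_nhds_one_of_forall_mem_Icc fun ε hε hε₁ =>
    hL.eventually_locMass_mconv_densMeasure_mem hf hneg hd hε hε₁
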